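/- If a Urysohn sphere S is approximately indivisible, then every rational Urysohn sphere S_Q is approximately indivisible. -/

import Mathlib

open Metric

/-- A metric space is ultrahomogeneous if every isometry between two finite
subspaces extends to a surjective self-isometry of the whole space. -/
def IsUltrahomogeneous (X : Type*) [MetricSpace X] : Prop :=
  ∀ F : Set X, F.Finite → ∀ φ : F → X, Isometry φ →
    ∃ ψ : X ≃ᵢ X, ∀ x : F, ψ x = φ x

/-- A metric space `X` is `ε`-indivisible if for every finite coloring there
is a color `i` and a subset `Y ⊆ X` isometric to `X` with every point of `Y`
within distance `ε` of the `i`-th color class. -/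
def EpsIndivisible (X : Type*) [MetricSpace X] (ε : ℝ) : Prop :=
  ∀ k : ℕ, 0 < k → ∀ χ : X → Fin k, ∃ i : Fin k, ∃ e : X → X, Isometry e ∧
    ∀ z : X, ∃ x : X, χ x = i ∧ dist (e z) x ≤ ε

/-- Approximate indivisibility (oscillation stability): `ε`-indivisible for
every `ε > 0`. -/
def ApproxIndivisible (X : Type*) [MetricSpace X] : Prop :=
  ∀ ε : ℝ, 0 < ε → EpsIndivisible X ε

/-- Exact indivisibility: some color class contains an isometric copy of `X`. -/
def Indivisible (X : Type*) [MetricSpace X] : Prop :=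
  ∀ k : ℕ, 0 < k → ∀ χ : X → Fin k, ∃ i : Fin k, ∃ e : X → X, Isometry e ∧
    ∀ z : X, χ (e z) = i

/-- The Urysohn sphere: complete, separable, ultrahomogeneous, of diameter at
most `1`, and universal for separable metric spaces of diameter at most `1`. -/
def IsUrysohnSphere (S : Type) [MetricSpace S] : Prop :=
  CompleteSpace S ∧ TopologicalSpace.SeparableSpace S ∧ IsUltrahomogeneous S ∧
  (∀ x y : S, dist x y ≤ 1) ∧
  ∀ (Y : Type) [MetricSpace Y], TopologicalSpace.SeparableSpace Y →
    (∀ a b : Y, dist a b ≤ 1) → ∃ f : Y → S, Isometry f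

/-- The rational Urysohn sphere: countable, ultrahomogeneous, with distances in
`ℚ ∩ [0,1]`, universal for countable metric spaces with distances in `ℚ ∩ [0,1]`. -/
def IsRationalUrysohnSphere (S : Type) [MetricSpace S] : Prop :=
  Countable S ∧ IsUltrahomogeneous S ∧
  (∀ x y : S, ∃ q : ℚ, 0 ≤ q ∧ q ≤ 1 ∧ dist x y = q) ∧
  ∀ (Y : Type) [MetricSpace Y], Countable Y →
    (∀ a b : Y, ∃ q : ℚ, 0 ≤ q ∧ q ≤ 1 ∧ dist a b = q) →
    ∃ f : Y → S, Isometry f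

/-- `[0,1]_m = {k/m : 0 ≤ k ≤ m}`. -/
def distSetM (m : ℕ) : Set ℝ := {d | ∃ k : ℕ, k ≤ m ∧ d = (k : ℝ) / m}

/-- The space `S_m`: countable, ultrahomogeneous, with distances in `[0,1]_m`,
universal for countable metric spaces with distances in `[0,1]_m`. -/
def IsUrysohnSphereM (m : ℕ) (S : Type) [MetricSpace S] : Prop :=
  Countable S ∧ IsUltrahomogeneous S ∧
  (∀ x y : S, dist x y ∈ distSetM m) ∧
  ∀ (Y : Type) [MetricSpace Y], Countable Y →
    (∀ a b : Y, dist a b ∈ distSetM m) → ∃ f : Y → S, Isometry f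

/-!
In both spheres every Katětov function on a finite set, with admissible values, is realized by a
point: by universality the corresponding one-point extension embeds, and ultrahomogeneity moves
the embedded copy of the finite set onto the given one. With this extension property, a
back-and-forth construction embeds `S_Q` isometrically onto a dense subset `f(S_Q)` of `S`, and a
forth construction approximates any isometric embedding `g : S_Q → S`, uniformly within any
`η > 0`, by `f ∘ e` with `e : S_Q → S_Q` isometric; the error of the `n`-th point exceeds the
previous ones by at most `η / 2 ^ (n + 1)`.

Given a colouring `χ` of `S_Q` and `ε > 0`, colour `S` by `χ ∘ π`, where `π` moves each point by
less than `ε / 3` into `f(S_Q)`. A copy `Φ` of `S` that is `ε / 3`-close to one colour class,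
restricted to `f(S_Q)` and approximated within `ε / 3` through `f`, gives a copy of `S_Q` that is
`ε`-close to that colour class.
-/

open Finset

section Katetov

variable {ι X : Type*} [PseudoMetricSpace X]

def IsKatetov (p : ι → X) (v : ι → ℝ) : Prop :=
  ∀ i j, |v i - v j| ≤ dist (p i) (p j) ∧ dist (p i) (p j) ≤ v i + v j

theorem isKatetov_dist (x : X) (p : ι → X) : IsKatetov p fun i => dist x (p i) := fun i j =>
  ⟨by simpa only [dist_comm x] using abs_dist_sub_le (p i) (p j) x, dist_triangle_left _ _ _⟩

theorem isKatetov_inf' [Fintype ι] [Nonempty ι] (p : ι → X) (q : ι → ℝ)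
    (hq : ∀ l m, dist (p l) (p m) ≤ q l + q m) :
    IsKatetov p fun i => univ.inf' univ_nonempty fun l => q l + dist (p i) (p l) := by
  have hlip : ∀ i j, univ.inf' univ_nonempty (fun l => q l + dist (p i) (p l)) ≤
      univ.inf' univ_nonempty (fun l => q l + dist (p j) (p l)) + dist (p i) (p j) := by
    intro i j
    obtain ⟨l, -, hl⟩ := exists_mem_eq_inf' univ_nonempty fun l => q l + dist (p j) (p l)
    rw [hl]
    calc _ ≤ q l + dist (p i) (p l) := inf'_le _ (mem_univ l)
      _ ≤ q l + dist (p j) (p l) + dist (p i) (p j) := by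
        linarith [dist_triangle (p i) (p j) (p l)]
  intro i j
  refine ⟨abs_sub_le_iff.2 ⟨by linarith [hlip i j], by linarith [hlip j i, dist_comm (p i) (p j)]⟩,
    ?_⟩
  obtain ⟨l, -, hl⟩ := exists_mem_eq_inf' univ_nonempty fun l => q l + dist (p i) (p l)
  obtain ⟨m, -, hm⟩ := exists_mem_eq_inf' univ_nonempty fun m => q m + dist (p j) (p m)
  beta_reduce
  rw [hl, hm]
  linarith [hq l m, dist_triangle4 (p i) (p l) (p m) (p j), dist_comm (p j) (p m)]

namespace IsKatetov

variable {p : ι → X} {v : ι → ℝ}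

theorem nonneg (hv : IsKatetov p v) (i : ι) : 0 ≤ v i := by
  linarith [(hv i i).2, dist_self (p i)]

theorem eq_of_eq (hv : IsKatetov p v) {i j : ι} (h : p i = p j) : v i = v j := by
  have := (hv i j).1
  rwa [h, dist_self, abs_nonpos_iff, sub_eq_zero] at this

theorem dist_eq_of_eq_zero (hv : IsKatetov p v) {i : ι} (hi : v i = 0) (j : ι) :
    dist (p i) (p j) = v j := by
  have h := (hv i j).1
  rw [hi, zero_sub, abs_neg, abs_of_nonneg (hv.nonneg j)] at h
  linarith [(hv i j).2]

theorem of_dist_eq {Y : Type*} [PseudoMetricSpace Y] {q : ι → Y} (hv : IsKatetov p v)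
    (h : ∀ i j, dist (q i) (q j) = dist (p i) (p j)) : IsKatetov q v := fun i j => by
  rw [h]
  exact hv i j

theorem option (hv : IsKatetov p v) {x : X} {c : ℝ} (hc : 0 ≤ c)
    (h : ∀ i, |v i - c| ≤ dist (p i) x ∧ dist (p i) x ≤ v i + c) :
    IsKatetov (fun o : Option ι => o.elim x p) (fun o => o.elim c v) := by
  rintro (_ | i) (_ | j)
  · simp [hc]
  · simpa [abs_sub_comm, dist_comm, add_comm] using h j
  · exact h i
  · exact hv i j

/-- The new point is put at the least distance from `x` compatible with the distances `v`. -/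
theorem option_sup' [Fintype ι] [Nonempty ι] (hv : IsKatetov p v) (x : X) :
    IsKatetov (fun o : Option ι => o.elim x p)
      (fun o => o.elim (univ.sup' univ_nonempty fun i => |v i - dist (p i) x|) v) := by
  set c := univ.sup' univ_nonempty fun i => |v i - dist (p i) x|
  have hge : ∀ i, |v i - dist (p i) x| ≤ c := fun i =>
    le_sup' (fun i => |v i - dist (p i) x|) (mem_univ i)
  have hle : ∀ i, c ≤ v i + dist (p i) x := fun i => sup'_le _ _ fun j _ => by
    have := abs_le.1 (hv j i).1
    rw [abs_sub_le_iff]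
    constructor
    · linarith [dist_triangle_right (p j) (p i) x]
    · linarith [dist_triangle (p j) (p i) x, (hv j i).2]
  refine hv.option ((abs_nonneg _).trans (hge (Classical.arbitrary ι))) fun i => ?_
  have := abs_le.1 (hge i)
  exact ⟨abs_sub_le_iff.2 ⟨by linarith, by linarith [hle i]⟩, by linarith⟩

theorem min_one (hv : IsKatetov p v) (hp : ∀ i j, dist (p i) (p j) ≤ 1) :
    IsKatetov p fun i => min 1 (v i) := by
  intro i j
  refine ⟨?_, ?_⟩
  · calc |min 1 (v i) - min 1 (v j)| ≤ max |1 - 1| |v i - v j| := abs_min_sub_min_le_max _ _ _ _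
      _ = |v i - v j| := by simp
      _ ≤ _ := (hv i j).1
  · have := (hv i j).2
    have := hp i j
    rcases min_cases 1 (v i) with ⟨h1, -⟩ | ⟨h1, -⟩ <;>
      rcases min_cases 1 (v j) with ⟨h2, -⟩ | ⟨h2, -⟩ <;> linarith [hv.nonneg i, hv.nonneg j]

end IsKatetov

end Katetov

def ratUnitInterval : Set ℝ := {d | ∃ q : ℚ, 0 ≤ q ∧ q ≤ 1 ∧ d = q}

theorem ratUnitInterval_subset_Icc : ratUnitInterval ⊆ Set.Icc 0 1 := by
  rintro _ ⟨q, hq0, hq1, rfl⟩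
  exact ⟨by exact_mod_cast hq0, by exact_mod_cast hq1⟩

theorem abs_sub_mem_ratUnitInterval {a b : ℝ} (ha : a ∈ ratUnitInterval)
    (hb : b ∈ ratUnitInterval) : |a - b| ∈ ratUnitInterval := by
  obtain ⟨q, hq0, hq1, rfl⟩ := ha
  obtain ⟨r, hr0, hr1, rfl⟩ := hb
  exact ⟨|q - r|, abs_nonneg _, abs_sub_le_iff.2 ⟨by linarith, by linarith⟩, by push_cast; rfl⟩

theorem min_one_mem_ratUnitInterval {q : ℚ} (hq : 0 ≤ q) : min 1 (q : ℝ) ∈ ratUnitInterval :=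
  ⟨min 1 q, le_min zero_le_one hq, min_le_left _ _, by push_cast; rfl⟩

def HasExtensionProperty (X : Type*) [MetricSpace X] (D : Set ℝ) : Prop :=
  ∀ (ι : Type) [Finite ι] (p : ι → X) (v : ι → ℝ), (∀ i, v i ∈ D) → IsKatetov p v →
    ∃ y, ∀ i, dist y (p i) = v i

section OnePointExtension

variable {A : Type*} [MetricSpace A]

def katetovDist (w : A → ℝ) : Option A → Option A → ℝ
  | none, none => 0
  | none, some a => w a
  | some a, none => w a
  | some a, some b => dist a b

abbrev katetovExtension (w : A → ℝ) (hw : IsKatetov id w) (hpos : ∀ a, 0 < w a) :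
    MetricSpace (Option A) where
  dist := katetovDist w
  dist_self := by rintro (_ | a) <;> simp [katetovDist]
  dist_comm := by rintro (_ | a) (_ | b) <;> simp [katetovDist, dist_comm]
  dist_triangle := by
    have hw : ∀ a b : A, |w a - w b| ≤ dist a b ∧ dist a b ≤ w a + w b := hw
    rintro (_ | a) (_ | b) (_ | c) <;> simp only [katetovDist]
    · norm_num
    · linarith [hpos c]
    · linarith [hpos b]
    · linarith [abs_le.1 (hw b c).1]
    · linarith [hpos a]
    · exact (hw a c).2
    · linarith [abs_le.1 (hw a b).1]
    · exact dist_triangle a b c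
  eq_of_dist_eq_zero := by
    rintro (_ | a) (_ | b) h <;> simp only [katetovDist] at h
    · rfl
    · exact absurd h (hpos b).ne'
    · exact absurd h (hpos a).ne'
    · rw [dist_eq_zero.1 h]

end OnePointExtension

namespace IsUltrahomogeneous

variable {X : Type} [MetricSpace X]

theorem exists_isometryEquiv_comp (hX : IsUltrahomogeneous X) {A : Type*} [MetricSpace A]
    [Finite A] {F G : A → X} (hF : Isometry F) (hG : Isometry G) :
    ∃ ψ : X ≃ᵢ X, ∀ a, ψ (F a) = G a := by
  obtain ⟨ψ, hψ⟩ := hX (Set.range F) (Set.finite_range F) (G ∘ hF.isometryEquivOnRange.symm)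
    (hG.comp hF.isometryEquivOnRange.symm.isometry)
  refine ⟨ψ, fun a => ?_⟩
  rw [hψ ⟨F a, Set.mem_range_self a⟩, Function.comp_apply]
  exact congrArg G (hF.isometryEquivOnRange.symm_apply_eq.2 (Subtype.ext rfl))

theorem hasExtensionProperty [Nonempty X] (hX : IsUltrahomogeneous X) {D : Set ℝ}
    (hD : ∀ x y : X, dist x y ∈ D)
    (huniv : ∀ (Y : Type) [MetricSpace Y], Finite Y → (∀ a b : Y, dist a b ∈ D) →
      ∃ f : Y → X, Isometry f) :
    HasExtensionProperty X D := by
  intro ι _ p v hvD hv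
  by_cases hzero : ∃ i, v i = 0
  · obtain ⟨i, hi⟩ := hzero
    exact ⟨p i, hv.dist_eq_of_eq_zero hi⟩
  push Not at hzero
  let w : Set.range p → ℝ := v ∘ Set.rangeSplitting p
  have hw : ∀ i, w ⟨p i, Set.mem_range_self i⟩ = v i := fun i =>
    hv.eq_of_eq (Set.apply_rangeSplitting p _)
  have hwK : IsKatetov id w := fun a b => by
    simpa [w, Subtype.dist_eq, Set.apply_rangeSplitting] using
      hv (Set.rangeSplitting p a) (Set.rangeSplitting p b)
  let _ : MetricSpace (Option (Set.range p)) :=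
    katetovExtension w hwK fun a => (hv.nonneg _).lt_of_ne (hzero _).symm
  obtain ⟨F, hF⟩ := huniv (Option (Set.range p)) inferInstance <| by
    rintro (_ | a) (_ | b)
    · simpa [dist, katetovDist] using hD (Classical.arbitrary X) (Classical.arbitrary X)
    · exact hvD _
    · exact hvD _
    · exact hD a b
  obtain ⟨ψ, hψ⟩ := hX.exists_isometryEquiv_comp (F := F ∘ some) (G := Subtype.val)
    (hF.comp (Isometry.of_dist_eq fun _ _ => rfl)) isometry_subtype_coe
  refine ⟨ψ (F none), fun i => ?_⟩
  calc dist (ψ (F none)) (p i) = dist (ψ (F none)) (ψ (F (some ⟨p i, Set.mem_range_self i⟩))) := by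
        rw [← Function.comp_apply (f := F), hψ]
    _ = dist (none : Option (Set.range p)) (some ⟨p i, Set.mem_range_self i⟩) := by
        rw [ψ.dist_eq, hF.dist_eq]
    _ = v i := hw i

end IsUltrahomogeneous

namespace IsUrysohnSphere

variable {S : Type} [MetricSpace S]

theorem nonempty (hS : IsUrysohnSphere S) : Nonempty S := by
  obtain ⟨f, -⟩ := hS.2.2.2.2 Unit inferInstance fun _ _ => by simp
  exact ⟨f ()⟩

theorem hasExtensionProperty (hS : IsUrysohnSphere S) : HasExtensionProperty S (Set.Icc 0 1) := by
  have := hS.nonempty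
  obtain ⟨-, -, hhom, hbd, huniv⟩ := hS
  exact hhom.hasExtensionProperty (D := Set.Icc 0 1) (fun x y => ⟨dist_nonneg, hbd x y⟩)
    fun Y _ _ hY => huniv Y inferInstance fun a b => (hY a b).2

end IsUrysohnSphere

namespace IsRationalUrysohnSphere

variable {S : Type} [MetricSpace S]

theorem nonempty (hS : IsRationalUrysohnSphere S) : Nonempty S := by
  obtain ⟨f, -⟩ := hS.2.2.2 Unit inferInstance fun _ _ => ⟨0, le_rfl, zero_le_one, by simp⟩
  exact ⟨f ()⟩

theorem hasExtensionProperty (hS : IsRationalUrysohnSphere S) :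
    HasExtensionProperty S ratUnitInterval := by
  have := hS.nonempty
  obtain ⟨-, hhom, hrat, huniv⟩ := hS
  exact hhom.hasExtensionProperty (D := ratUnitInterval) hrat
    fun Y _ _ hY => huniv Y inferInstance hY

end IsRationalUrysohnSphere

section Recursion

variable {α : Type*}

def seqOfNext (next : (n : ℕ) → (Fin n → α) → α) (n : ℕ) : α :=
  next n fun i => seqOfNext next i
termination_by n
decreasing_by exact i.isLt

theorem exists_seq_of_forall_exists (P : ℕ → α → Prop) {r : α → α → Prop} (hrefl : ∀ a, r a a)
    (hsymm : ∀ a b, r a b → r b a)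
    (h : ∀ n (g : Fin n → α), (∀ i : Fin n, P i (g i)) → (∀ i j, r (g i) (g j)) →
      ∃ a, P n a ∧ ∀ i, r (g i) a) :
    ∃ x : ℕ → α, (∀ n, P n (x n)) ∧ ∀ m n, r (x m) (x n) := by
  obtain ⟨a, -⟩ := h 0 Fin.elim0 (fun i => i.elim0) fun i => i.elim0
  have : Nonempty α := ⟨a⟩
  choose! next hnext using h
  have hx : ∀ n, seqOfNext next n = next n fun i => seqOfNext next i := fun n => by
    rw [seqOfNext]
  have key : ∀ n, P n (seqOfNext next n) ∧ ∀ m ≤ n, r (seqOfNext next m) (seqOfNext next n) := by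
    intro n
    induction n using Nat.strong_induction_on with
    | _ n ih =>
      have hpair : ∀ i j : Fin n, r (seqOfNext next i) (seqOfNext next j) := fun i j => by
        rcases le_total (i : ℕ) j with hij | hij
        · exact (ih j j.2).2 i hij
        · exact hsymm _ _ ((ih i i.2).2 j hij)
      obtain ⟨hP, hr⟩ := hnext n _ (fun i => (ih i i.2).1) hpair
      rw [← hx] at hP hr
      refine ⟨hP, fun m hm => ?_⟩
      rcases hm.lt_or_eq with hm | rfl
      · exact hr ⟨m, hm⟩
      · exact hrefl _
  refine ⟨seqOfNext next, fun n => (key n).1, fun m n => ?_⟩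
  rcases le_total m n with hmn | hnm
  · exact (key n).2 m hmn
  · exact hsymm _ _ ((key m).2 n hnm)

end Recursion

theorem exists_isometry_of_forall_exists_extension {Z Y : Type*} [MetricSpace Z] [MetricSpace Y]
    (P : ℕ → Z × Y → Prop)
    (hstep : ∀ n (g : Fin n → Z × Y), (∀ i : Fin n, P i (g i)) →
      (∀ i j, dist (g i).1 (g j).1 = dist (g i).2 (g j).2) →
      ∃ a, P n a ∧ ∀ i, dist (g i).1 a.1 = dist (g i).2 a.2)
    (hsurj : ∀ z, ∃ n, ∀ a, P n a → a.1 = z) :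
    ∃ e : Z → Y, Isometry e ∧ ∀ n, ∃ a, P n a ∧ e a.1 = a.2 := by
  obtain ⟨x, hxP, hx⟩ := exists_seq_of_forall_exists P
    (r := fun a b => dist a.1 b.1 = dist a.2 b.2) (fun _ => by simp)
    (fun a b h => by simpa [dist_comm] using h) hstep
  choose ν hν using fun z => (hsurj z).imp fun n hn => hn _ (hxP n)
  refine ⟨fun z => (x (ν z)).2, Isometry.of_dist_eq fun a b => ?_, fun n => ⟨x n, hxP n, ?_⟩⟩
  · rw [← hx, hν, hν]
  · rw [← dist_eq_zero, ← hx, hν, dist_self]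

section DenseEmbedding

variable {X Y : Type*} [MetricSpace X] [MetricSpace Y]

theorem exists_isKatetov_ratUnitInterval {ι : Type*} [Fintype ι] {p : ι → X}
    (hp : ∀ i j, dist (p i) (p j) ∈ ratUnitInterval) {d : ι → ℝ} (hd : IsKatetov p d)
    (hd1 : ∀ i, d i ≤ 1) {τ : ℝ} (hτ : 0 < τ) :
    ∃ r : ι → ℝ, IsKatetov p r ∧ (∀ i, r i ∈ ratUnitInterval) ∧
      ∀ i, d i ≤ r i ∧ r i ≤ d i + τ := by
  rcases isEmpty_or_nonempty ι with hι | hι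
  · exact ⟨d, hd, isEmptyElim, isEmptyElim⟩
  choose q hq using fun l => exists_rat_btwn (lt_add_of_pos_right (d l) hτ)
  refine ⟨fun i => min 1 (univ.inf' univ_nonempty fun l => (q l : ℝ) + dist (p i) (p l)),
    ?_, fun i => ?_, fun i => ⟨?_, ?_⟩⟩
  · refine (isKatetov_inf' p _ fun l m => ?_).min_one fun i j =>
      (ratUnitInterval_subset_Icc (hp i j)).2
    linarith [(hd l m).2, (hq l).1, (hq m).1]
  · obtain ⟨l, -, hl⟩ := exists_mem_eq_inf' univ_nonempty fun l => (q l : ℝ) + dist (p i) (p l)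
    obtain ⟨s, hs0, -, hs⟩ := hp i l
    have hql : 0 ≤ q l := by exact_mod_cast (show (0 : ℝ) ≤ q l by linarith [hd.nonneg l, (hq l).1])
    beta_reduce
    rw [hl, hs, ← Rat.cast_add]
    exact min_one_mem_ratUnitInterval (add_nonneg hql hs0)
  · exact le_min (hd1 i) (le_inf' _ _ fun l _ => by linarith [abs_le.1 (hd i l).1, (hq l).1])
  · calc _ ≤ (q i : ℝ) + dist (p i) (p i) := (min_le_right _ _).trans (inf'_le _ (mem_univ i))
      _ ≤ d i + τ := by rw [dist_self]; linarith [(hq i).2]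

theorem exists_extension_fst (hY : HasExtensionProperty Y (Set.Icc 0 1))
    (hX1 : ∀ a b : X, dist a b ≤ 1) {ι : Type} [Finite ι] (g : ι → X × Y)
    (hg : ∀ i j, dist (g i).1 (g j).1 = dist (g i).2 (g j).2) (z : X) :
    ∃ y : Y, ∀ i, dist (g i).1 z = dist (g i).2 y := by
  obtain ⟨y, hy⟩ := hY ι (fun i => (g i).2) (fun i => dist z (g i).1)
    (fun i => ⟨dist_nonneg, hX1 _ _⟩) ((isKatetov_dist z _).of_dist_eq fun i j => (hg i j).symm)
  exact ⟨y, fun i => by rw [dist_comm, ← hy i, dist_comm]⟩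

theorem exists_extension_snd_near (hX : HasExtensionProperty X ratUnitInterval)
    (hXr : ∀ a b : X, dist a b ∈ ratUnitInterval) (hY : HasExtensionProperty Y (Set.Icc 0 1))
    (hY1 : ∀ a b : Y, dist a b ≤ 1) {ι : Type} [Fintype ι] (g : ι → X × Y)
    (hg : ∀ i j, dist (g i).1 (g j).1 = dist (g i).2 (g j).2) (t : Y) {τ : ℝ} (hτ0 : 0 < τ)
    (hτ1 : τ ≤ 1) :
    ∃ a : X × Y, dist a.2 t ≤ τ ∧ ∀ i, dist (g i).1 a.1 = dist (g i).2 a.2 := by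
  by_cases hnear : ∃ i, dist (g i).2 t ≤ τ
  · obtain ⟨i, hi⟩ := hnear
    exact ⟨g i, hi, fun j => hg j i⟩
  push Not at hnear
  obtain ⟨r, hr, hrQ, hdr⟩ := exists_isKatetov_ratUnitInterval (fun i j => hXr _ _)
    ((isKatetov_dist t _).of_dist_eq hg) (fun i => hY1 _ _) hτ0
  obtain ⟨z, hz⟩ := hX ι _ r hrQ hr
  have hmixed : ∀ i, |r i - τ| ≤ dist (g i).2 t ∧ dist (g i).2 t ≤ r i + τ := fun i => by
    have := hnear i
    have := hdr i
    rw [dist_comm] at this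
    exact ⟨abs_sub_le_iff.2 ⟨by linarith, by linarith⟩, by linarith⟩
  obtain ⟨y, hy⟩ := hY (Option ι) (fun o => o.elim t fun i => (g i).2) (fun o => o.elim τ r)
    (by rintro (_ | i); exacts [⟨hτ0.le, hτ1⟩, ratUnitInterval_subset_Icc (hrQ i)])
    ((hr.of_dist_eq fun i j => (hg i j).symm).option hτ0.le hmixed)
  refine ⟨(z, y), (hy none).le, fun i => ?_⟩
  rw [dist_comm, hz i]
  exact (hy (some i)).symm.trans (dist_comm _ _)

theorem exists_isometry_denseRange [Countable X] [Nonempty X]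
    [TopologicalSpace.SeparableSpace Y] [Nonempty Y]
    (hX : HasExtensionProperty X ratUnitInterval) (hXr : ∀ a b : X, dist a b ∈ ratUnitInterval)
    (hY : HasExtensionProperty Y (Set.Icc 0 1)) (hY1 : ∀ a b : Y, dist a b ≤ 1) :
    ∃ f : X → Y, Isometry f ∧ DenseRange f := by
  obtain ⟨σ, hσ⟩ := exists_surjective_nat (X ⊕ ℕ × ℕ)
  obtain ⟨t, ht⟩ := TopologicalSpace.exists_dense_seq Y
  -- `σ` schedules the forth steps `inl z` and the steps `inr (k, m)` coming `2⁻ᵐ`-close to `t k`.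
  let P : ℕ → X × Y → Prop := fun n a =>
    Sum.elim (fun z => a.1 = z) (fun km => dist a.2 (t km.1) ≤ (1 / 2) ^ km.2) (σ n)
  have hstep : ∀ n (g : Fin n → X × Y), (∀ i : Fin n, P i (g i)) →
      (∀ i j, dist (g i).1 (g j).1 = dist (g i).2 (g j).2) →
      ∃ a, P n a ∧ ∀ i, dist (g i).1 a.1 = dist (g i).2 a.2 := by
    intro n g _ hg
    cases hn : σ n with
    | inl z =>
      obtain ⟨y, hy⟩ := exists_extension_fst hY
        (fun a b => (ratUnitInterval_subset_Icc (hXr a b)).2) g hg z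
      exact ⟨(z, y), by simp [P, hn], hy⟩
    | inr km =>
      obtain ⟨a, ha, hga⟩ := exists_extension_snd_near hX hXr hY hY1 g hg (t km.1)
        (by positivity : (0 : ℝ) < (1 / 2) ^ km.2) (pow_le_one₀ (by norm_num) (by norm_num))
      exact ⟨a, by simpa [P, hn] using ha, hga⟩
  obtain ⟨f, hf, hfP⟩ := exists_isometry_of_forall_exists_extension P hstep fun z => by
    obtain ⟨n, hn⟩ := hσ (Sum.inl z)
    exact ⟨n, fun a ha => by simpa [P, hn] using ha⟩
  refine ⟨f, hf, denseRange_iff.2 fun y ε hε => ?_⟩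
  obtain ⟨k, hk⟩ := denseRange_iff.1 ht y (ε / 2) (half_pos hε)
  obtain ⟨m, hm⟩ := exists_pow_lt_of_lt_one (half_pos hε) (by norm_num : (1 / 2 : ℝ) < 1)
  obtain ⟨n, hn⟩ := hσ (Sum.inr (k, m))
  obtain ⟨a, ha, hfa⟩ := hfP n
  have ha : dist a.2 (t k) ≤ (1 / 2) ^ m := by simpa [P, hn] using ha
  refine ⟨a.1, ?_⟩
  rw [hfa]
  linarith [dist_triangle y (t k) a.2, dist_comm (t k) a.2]

end DenseEmbedding

section Approximation

variable {X Y : Type*} [MetricSpace X] [MetricSpace Y]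

theorem exists_dist_eq_dist_lt_of_denseRange (hX : HasExtensionProperty X ratUnitInterval)
    (hXr : ∀ a b : X, dist a b ∈ ratUnitInterval) {f : X → Y} (hf : Isometry f)
    (hfd : DenseRange f) {ι : Type} [Fintype ι] (p : ι → X) (q : ι → Y) (s : Y)
    (hpq : ∀ i j, dist (p i) (p j) = dist (q i) (q j))
    (hs : ∀ i, dist s (q i) ∈ ratUnitInterval) {E θ : ℝ} (hE0 : 0 ≤ E)
    (hE : ∀ i, dist (f (p i)) (q i) ≤ E) (hθ : 0 < θ) :
    ∃ y, (∀ i, dist y (p i) = dist s (q i)) ∧ dist (f y) s < E + θ := by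
  obtain ⟨w, hw⟩ := denseRange_iff.1 hfd s (θ / 2) (half_pos hθ)
  rcases isEmpty_or_nonempty ι with hι | hι
  · exact ⟨w, isEmptyElim, by rw [dist_comm]; linarith⟩
  set c := univ.sup' univ_nonempty fun i => |dist s (q i) - dist (p i) w|
  have hcQ : c ∈ ratUnitInterval := by
    obtain ⟨i, -, hi⟩ := exists_mem_eq_sup' univ_nonempty fun i => |dist s (q i) - dist (p i) w|
    rw [show c = |dist s (q i) - dist (p i) w| from hi]
    exact abs_sub_mem_ratUnitInterval (hs i) (hXr _ _)
  have hcE : c ≤ E + θ / 2 := sup'_le _ _ fun i _ => by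
    have h := dist_dist_dist_le s (q i) (f w) (f (p i))
    rw [Real.dist_eq, hf.dist_eq, dist_comm w] at h
    linarith [hE i, dist_comm (q i) (f (p i))]
  obtain ⟨y, hy⟩ := hX (Option ι) (fun o => o.elim w p)
    (fun o => o.elim c fun i => dist s (q i)) (by rintro (_ | i); exacts [hcQ, hs i])
    (((isKatetov_dist s q).of_dist_eq hpq).option_sup' w)
  have hyw : dist y w = c := hy none
  refine ⟨y, fun i => hy (some i), ?_⟩
  calc dist (f y) s ≤ dist (f y) (f w) + dist (f w) s := dist_triangle _ _ _
    _ < E + θ := by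
      rw [hf.dist_eq, hyw, dist_comm]
      linarith

theorem exists_isometry_dist_lt_of_denseRange (hX : HasExtensionProperty X ratUnitInterval)
    (hXr : ∀ a b : X, dist a b ∈ ratUnitInterval) {f : X → Y} (hf : Isometry f)
    (hfd : DenseRange f) {Z : Type*} [MetricSpace Z] [Countable Z] [Nonempty Z]
    (hZr : ∀ a b : Z, dist a b ∈ ratUnitInterval) {g : Z → Y} (hg : Isometry g) {η : ℝ}
    (hη : 0 < η) : ∃ e : Z → X, Isometry e ∧ ∀ z, dist (f (e z)) (g z) < η := by
  obtain ⟨u, hu⟩ := exists_surjective_nat Z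
  let P : ℕ → Z × X → Prop := fun n a =>
    a.1 = u n ∧ dist (f a.2) (g a.1) < η - η / 2 ^ (n + 1)
  have hstep : ∀ n (b : Fin n → Z × X), (∀ i : Fin n, P i (b i)) →
      (∀ i j, dist (b i).1 (b j).1 = dist (b i).2 (b j).2) →
      ∃ a, P n a ∧ ∀ i, dist (b i).1 a.1 = dist (b i).2 a.2 := by
    intro n b hb hbd
    have hE : ∀ i : Fin n, dist (f (b i).2) (g (b i).1) ≤ η - η / 2 ^ n := fun i => by
      have : η / 2 ^ n ≤ η / 2 ^ ((i : ℕ) + 1) :=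
        div_le_div_of_nonneg_left hη.le (by positivity) (pow_le_pow_right₀ one_le_two i.2)
      linarith [(hb i).2]
    obtain ⟨y, hy, hyd⟩ := exists_dist_eq_dist_lt_of_denseRange hX hXr hf hfd (fun i => (b i).2)
      (fun i => g (b i).1) (g (u n)) (fun i j => by rw [hg.dist_eq, hbd])
      (fun i => by rw [hg.dist_eq]; exact hZr _ _)
      (sub_nonneg.2 (div_le_self hη.le (one_le_pow₀ one_le_two))) hE
      (by positivity : 0 < η / 2 ^ (n + 1))
    refine ⟨(u n, y), ⟨rfl, ?_⟩, fun i => ?_⟩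
    · calc _ < η - η / 2 ^ n + η / 2 ^ (n + 1) := hyd
        _ = η - η / 2 ^ (n + 1) := by rw [pow_succ]; ring
    · rw [dist_comm (b i).2, hy i, hg.dist_eq, dist_comm]
  obtain ⟨e, he, heP⟩ := exists_isometry_of_forall_exists_extension P hstep fun z => by
    obtain ⟨n, hn⟩ := hu z
    exact ⟨n, fun a ha => ha.1.trans hn⟩
  refine ⟨e, he, fun z => ?_⟩
  obtain ⟨n, rfl⟩ := hu z
  obtain ⟨a, ⟨ha, had⟩, hea⟩ := heP n
  rw [← ha, hea]
  linarith [(by positivity : 0 < η / 2 ^ (n + 1))]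

end Approximation

theorem ApproxIndivisible.of_isometry_denseRange {X Y : Type*} [MetricSpace X] [MetricSpace Y]
    (hY : ApproxIndivisible Y) {f : X → Y} (hf : Isometry f) (hfd : DenseRange f)
    (happrox : ∀ g : X → Y, Isometry g → ∀ η > 0,
      ∃ e : X → X, Isometry e ∧ ∀ z, dist (f (e z)) (g z) < η) :
    ApproxIndivisible X := by
  intro ε hε k hk χ
  have hε3 : 0 < ε / 3 := by positivity
  choose π hπ using fun y => denseRange_iff.1 hfd y (ε / 3) hε3
  obtain ⟨i, Φ, hΦ, hcol⟩ := hY (ε / 3) hε3 k hk (χ ∘ π)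
  obtain ⟨e, he, hclose⟩ := happrox (fun z => Φ (f z)) (hΦ.comp hf) (ε / 3) hε3
  refine ⟨i, e, he, fun z => ?_⟩
  obtain ⟨y, hy, hdy⟩ := hcol (f z)
  refine ⟨π y, hy, ?_⟩
  calc dist (e z) (π y) = dist (f (e z)) (f (π y)) := (hf.dist_eq _ _).symm
    _ ≤ dist (f (e z)) (Φ (f z)) + dist (Φ (f z)) y + dist y (f (π y)) := dist_triangle4 _ _ _ _
    _ ≤ ε := by linarith [hclose z, hπ y]

/-- If a Urysohn sphere is approximately indivisible, then every rational
Urysohn sphere is approximately indivisible. -/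
theorem stmt6 (S : Type) [MetricSpace S] (hS : IsUrysohnSphere S)
    (h : ApproxIndivisible S)
    (SQ : Type) [MetricSpace SQ] (hSQ : IsRationalUrysohnSphere SQ) :
    ApproxIndivisible SQ := by
  have : Nonempty S := hS.nonempty
  have : Nonempty SQ := hSQ.nonempty
  have : TopologicalSpace.SeparableSpace S := hS.2.1
  have : Countable SQ := hSQ.1
  obtain ⟨f, hf, hfd⟩ := exists_isometry_denseRange hSQ.hasExtensionProperty hSQ.2.2.1
    hS.hasExtensionProperty hS.2.2.2.1
  exact h.of_isometry_denseRange hf hfd fun g hg η hη =>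
    exists_isometry_dist_lt_of_denseRange hSQ.hasExtensionProperty hSQ.2.2.1 hf hfd hSQ.2.2.1 hg hη
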